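/- arXiv:1303.1344 — 4 statements merged into one kernel-verified Lean document; each statement's English description precedes it below -/
import Mathlib

section
/- Let (F,G,A) and (F₁,G₁,B) be bipolar soft sets over U. Then their extended union (H,I,A∪B) again satisfies the consistency constraint: H(e) ∩ I(e) = ∅ for every e ∈ A∪B; that is, the extended union of two bipolar soft sets is a bipolar soft set. -/
/- Bipolar soft sets over a universe `U` with parameters from `E`.
A bipolar soft set with parameter set `A : Set E` is a pair of functions
`F G : E → Set U` with `F e ∩ G e = ∅` for every `e ∈ A`. -/

noncomputable section
open Classical

variable {U : Type*} {E : Type*}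

/-- First component of the extended union of `(F,G,A)` and `(F₁,G₁,B)`. -/
def euF (A B : Set E) (F F₁ : E → Set U) : E → Set U := fun e =>
  if e ∈ A then (if e ∈ B then F e ∪ F₁ e else F e) else F₁ e

/-- Second component of the extended union of `(F,G,A)` and `(F₁,G₁,B)`. -/
def euG (A B : Set E) (G G₁ : E → Set U) : E → Set U := fun e =>
  if e ∈ A then (if e ∈ B then G e ∩ G₁ e else G e) else G₁ e

/-- First component of the extended intersection of `(F,G,A)` and `(F₁,G₁,B)`. -/
def eiF (A B : Set E) (F F₁ : E → Set U) : E → Set U := fun e =>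
  if e ∈ A then (if e ∈ B then F e ∩ F₁ e else F e) else F₁ e

/-- Second component of the extended intersection of `(F,G,A)` and `(F₁,G₁,B)`. -/
def eiG (A B : Set E) (G G₁ : E → Set U) : E → Set U := fun e =>
  if e ∈ A then (if e ∈ B then G e ∪ G₁ e else G e) else G₁ e

/-- First component of the restricted union (on `A ∩ B`). -/
def ruF (F F₁ : E → Set U) : E → Set U := fun e => F e ∪ F₁ e

/-- Second component of the restricted union (on `A ∩ B`). -/
def ruG (G G₁ : E → Set U) : E → Set U := fun e => G e ∩ G₁ e

/-- First component of the restricted intersection (on `A ∩ B`). -/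
def riF (F F₁ : E → Set U) : E → Set U := fun e => F e ∩ F₁ e

/-- Second component of the restricted intersection (on `A ∩ B`). -/
def riG (G G₁ : E → Set U) : E → Set U := fun e => G e ∪ G₁ e

/-- First component of the AND-product (on `A ×ˢ B`). -/
def andF (F F₁ : E → Set U) : E × E → Set U := fun p => F p.1 ∩ F₁ p.2

/-- Second component of the AND-product (on `A ×ˢ B`). -/
def andG (G G₁ : E → Set U) : E × E → Set U := fun p => G p.1 ∪ G₁ p.2

/-- First component of the OR-product (on `A ×ˢ B`). -/
def orF (F F₁ : E → Set U) : E × E → Set U := fun p => F p.1 ∪ F₁ p.2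

/-- Second component of the OR-product (on `A ×ˢ B`). -/
def orG (G G₁ : E → Set U) : E × E → Set U := fun p => G p.1 ∩ G₁ p.2

/-- Bipolar soft subset relation: `(F,G,A) ⊆̃ (F₁,G₁,B)`. -/
def BSSsubset (F G : E → Set U) (A : Set E) (F₁ G₁ : E → Set U) (B : Set E) : Prop :=
  A ⊆ B ∧ ∀ e ∈ A, F e ⊆ F₁ e ∧ G₁ e ⊆ G e

/-- The extended union of two bipolar soft sets is a bipolar soft set. -/
theorem extUnion_isBipolarSoftSet (A B : Set E) (F G F₁ G₁ : E → Set U)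
    (h : ∀ e ∈ A, F e ∩ G e = ∅) (h₁ : ∀ e ∈ B, F₁ e ∩ G₁ e = ∅) :
    ∀ e ∈ A ∪ B, euF A B F F₁ e ∩ euG A B G G₁ e = ∅ := by
  intro e he
  unfold euF euG
  by_cases ha : e ∈ A <;> by_cases hb : e ∈ B <;> simp only [ha, hb, if_true, if_false]
  · have h2 := h e ha; have h3 := h₁ e hb
    ext x; simp only [Set.mem_inter_iff, Set.mem_union, Set.mem_empty_iff_false, iff_false]
    rintro ⟨hf | hf, hg, hg1⟩
    · exact Set.eq_empty_iff_forall_notMem.mp h2 x ⟨hf, hg⟩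
    · exact Set.eq_empty_iff_forall_notMem.mp h3 x ⟨hf, hg1⟩
  · exact h e ha
  · exact h₁ e hb
  · rcases he with h|h <;> [exact absurd h ha; exact absurd h hb]
end
end

section
/- Let (F,G,A) and (F₁,G₁,B) be bipolar soft sets over U. Then (F,G,A) ∪̃ (F₁,G₁,B) is the smallest bipolar soft set over U containing both: (F,G,A) ⊆̃ (F,G,A) ∪̃ (F₁,G₁,B), (F₁,G₁,B) ⊆̃ (F,G,A) ∪̃ (F₁,G₁,B), and for every bipolar soft set (F₂,G₂,C) over U with (F,G,A) ⊆̃ (F₂,G₂,C) and (F₁,G₁,B) ⊆̃ (F₂,G₂,C) one has (F,G,A) ∪̃ (F₁,G₁,B) ⊆̃ (F₂,G₂,C). -/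
/- Bipolar soft sets over a universe `U` with parameters from `E`.
A bipolar soft set with parameter set `A : Set E` is a pair of functions
`F G : E → Set U` with `F e ∩ G e = ∅` for every `e ∈ A`. -/

noncomputable section
open Classical

variable {U : Type*} {E : Type*}

/-- The extended union is the smallest bipolar soft set containing both operands. -/
theorem extUnion_smallest (A B : Set E) (F G F₁ G₁ : E → Set U)
    (h : ∀ e ∈ A, F e ∩ G e = ∅) (h₁ : ∀ e ∈ B, F₁ e ∩ G₁ e = ∅) :
    BSSsubset F G A (euF A B F F₁) (euG A B G G₁) (A ∪ B) ∧
    BSSsubset F₁ G₁ B (euF A B F F₁) (euG A B G G₁) (A ∪ B) ∧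
    ∀ (F₂ G₂ : E → Set U) (C : Set E), (∀ e ∈ C, F₂ e ∩ G₂ e = ∅) →
      BSSsubset F G A F₂ G₂ C → BSSsubset F₁ G₁ B F₂ G₂ C →
      BSSsubset (euF A B F F₁) (euG A B G G₁) (A ∪ B) F₂ G₂ C := by
  refine ⟨⟨Set.subset_union_left, fun e he => ?_⟩,
          ⟨Set.subset_union_right, fun e he => ?_⟩,
          fun F₂ G₂ C hC hA hB => ?_⟩
  · simp only [euF, euG, if_pos he]
    by_cases hb : e ∈ B <;> simp [hb, Set.inter_subset_left]
  · simp only [euF, euG]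
    by_cases ha : e ∈ A <;> simp [ha, he, Set.inter_subset_right, Set.subset_union_right]
  · refine ⟨Set.union_subset hA.1 hB.1, fun e he => ?_⟩
    simp only [euF, euG]
    rcases he with ha | hb
    · rcases hA.2 e ha with ⟨h1, h2⟩
      by_cases hb : e ∈ B
      · rcases hB.2 e hb with ⟨h3, h4⟩
        simp [ha, hb]
        exact ⟨⟨h1, h3⟩, h2, h4⟩
      · simp [ha, hb]; exact ⟨h1, h2⟩
    · by_cases ha : e ∈ A
      · rcases hA.2 e ha with ⟨h1, h2⟩
        rcases hB.2 e hb with ⟨h3, h4⟩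
        simp [ha, hb]
        exact ⟨⟨h1, h3⟩, h2, h4⟩
      · simp [ha]; exact hB.2 e hb
end
end

section
/- Restricted intersection distributes over extended union: for bipolar soft sets (F,G,A), (F₁,G₁,B), (F₂,G₂,C) over U (with the relevant parameter-set intersections nonempty), (F,G,A) ∩_R ((F₁,G₁,B) ∪̃ (F₂,G₂,C)) = ((F,G,A) ∩_R (F₁,G₁,B)) ∪̃ ((F,G,A) ∩_R (F₂,G₂,C)); both sides have parameter set A∩(B∪C) and their component functions agree at every e ∈ A∩(B∪C). -/
/- Bipolar soft sets over a universe `U` with parameters from `E`.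
A bipolar soft set with parameter set `A : Set E` is a pair of functions
`F G : E → Set U` with `F e ∩ G e = ∅` for every `e ∈ A`. -/

noncomputable section
open Classical

variable {U : Type*} {E : Type*}

/-- Restricted intersection distributes over extended union:
`(F,G,A) ∩_R ((F₁,G₁,B) ∪̃ (F₂,G₂,C)) = ((F,G,A) ∩_R (F₁,G₁,B)) ∪̃ ((F,G,A) ∩_R (F₂,G₂,C))`,
componentwise on `A ∩ (B ∪ C)`. -/
theorem resInter_distrib_extUnion (A B C : Set E) (F G F₁ G₁ F₂ G₂ : E → Set U)
    (h : ∀ e ∈ A, F e ∩ G e = ∅) (h₁ : ∀ e ∈ B, F₁ e ∩ G₁ e = ∅)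
    (h₂ : ∀ e ∈ C, F₂ e ∩ G₂ e = ∅)
    (hAB : A ∩ B ≠ ∅) (hAC : A ∩ C ≠ ∅) (hABC : A ∩ (B ∪ C) ≠ ∅) :
    ∀ e ∈ A ∩ (B ∪ C),
      riF F (euF B C F₁ F₂) e
        = euF (A ∩ B) (A ∩ C) (riF F F₁) (riF F F₂) e ∧
      riG G (euG B C G₁ G₂) e
        = euG (A ∩ B) (A ∩ C) (riG G G₁) (riG G G₂) e := by
  intro e ⟨hA, hBC⟩
  simp only [riF, riG, euF, euG, Set.mem_inter_iff]
  by_cases hB : e ∈ B <;> by_cases hC : e ∈ C <;>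
    simp only [hA, hB, hC, if_true, if_false, and_true, and_false, true_and, if_pos, if_neg,
      not_false_iff] <;>
    constructor <;> ext x <;> simp <;> tauto
end
end

section
/- Restricted union distributes over extended intersection: for bipolar soft sets (F,G,A), (F₁,G₁,B), (F₂,G₂,C) over U (with the relevant parameter-set intersections nonempty), (F,G,A) ∪_R ((F₁,G₁,B) ∩̃ (F₂,G₂,C)) = ((F,G,A) ∪_R (F₁,G₁,B)) ∩̃ ((F,G,A) ∪_R (F₂,G₂,C)); both sides have parameter set A∩(B∪C) and their component functions agree at every e ∈ A∩(B∪C). -/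
/- Bipolar soft sets over a universe `U` with parameters from `E`.
A bipolar soft set with parameter set `A : Set E` is a pair of functions
`F G : E → Set U` with `F e ∩ G e = ∅` for every `e ∈ A`. -/

noncomputable section
open Classical

variable {U : Type*} {E : Type*}

/-- Restricted union distributes over extended intersection:
`(F,G,A) ∪_R ((F₁,G₁,B) ∩̃ (F₂,G₂,C)) = ((F,G,A) ∪_R (F₁,G₁,B)) ∩̃ ((F,G,A) ∪_R (F₂,G₂,C))`,
componentwise on `A ∩ (B ∪ C)`. -/
theorem resUnion_distrib_extInter (A B C : Set E) (F G F₁ G₁ F₂ G₂ : E → Set U)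
    (h : ∀ e ∈ A, F e ∩ G e = ∅) (h₁ : ∀ e ∈ B, F₁ e ∩ G₁ e = ∅)
    (h₂ : ∀ e ∈ C, F₂ e ∩ G₂ e = ∅)
    (hAB : A ∩ B ≠ ∅) (hAC : A ∩ C ≠ ∅) (hABC : A ∩ (B ∪ C) ≠ ∅) :
    ∀ e ∈ A ∩ (B ∪ C),
      ruF F (eiF B C F₁ F₂) e
        = eiF (A ∩ B) (A ∩ C) (ruF F F₁) (ruF F F₂) e ∧
      ruG G (eiG B C G₁ G₂) e
        = eiG (A ∩ B) (A ∩ C) (ruG G G₁) (ruG G G₂) e := by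
  rintro e ⟨heA, heBC⟩
  simp only [ruF, ruG, eiF, eiG, Set.mem_inter_iff]
  by_cases hB : e ∈ B <;> by_cases hC : e ∈ C <;>
    simp_all <;> constructor <;> ext x <;> simp <;> tauto
end
end
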